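/- Let m ≥ 1 be an integer and write P_μ^m(η) = α + βη + γη² + δη³ (type I_{1,3}); set R_m(μ) = (γ+δ)(β+γ+δ) − αδ, the Hurwitz determinant Δ₂ of P_μ^m. Then R_m(μ) = (m+1)(m+2)μ³ · [4+(m−1)μ] · (3+mμ) · [5m+4+(m²−2m−2)μ]. For m ≥ 3, R_m(μ) > 0 for all μ > 0. For m = 1 and m = 2, R_m has exactly one positive root ν_m, with ν₁ = 3 and ν₂ = 7, and ν_m > μ_m where μ_m is the unique positive root of q_m(μ) = P_μ^m(1/2). -/

import Mathlib

/-- Degree-0 coefficient `α` of the type `I_{1,3}` representative polynomial. -/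
noncomputable def coeffA (μ : ℝ) : ℝ := (1 - μ) * (2 - μ) * (3 - μ)

/-- Degree-1 coefficient `β` of the type `I_{1,3}` representative polynomial. -/
noncomputable def coeffB (m : ℕ) (μ : ℝ) : ℝ :=
  ((m : ℝ) + 1) * μ * (1 - μ) * (11 - 7 * μ)

/-- Degree-2 coefficient `γ` of the type `I_{1,3}` representative polynomial. -/
noncomputable def coeffC (m : ℕ) (μ : ℝ) : ℝ :=
  6 * ((m : ℝ) + 1) * ((m : ℝ) + 2) * (1 - μ) * μ ^ 2

/-- Degree-3 coefficient `δ` of the type `I_{1,3}` representative polynomial. -/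
noncomputable def coeffD (m : ℕ) (μ : ℝ) : ℝ :=
  ((m : ℝ) + 1) * ((m : ℝ) + 2) * ((m : ℝ) + 3) * μ ^ 3

/-- Hurwitz determinant `Δ₂ = (γ+δ)(β+γ+δ) - αδ` of `P_μ^m` (type `I_{1,3}`). -/
noncomputable def RI13 (m : ℕ) (μ : ℝ) : ℝ :=
  (coeffC m μ + coeffD m μ) * (coeffB m μ + coeffC m μ + coeffD m μ) -
    coeffA μ * coeffD m μ

/-- `q_m(μ) = P_μ^m(1/2)` for type `I_{1,3}`. -/
noncomputable def qI13 (m : ℕ) (μ : ℝ) : ℝ :=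
  coeffA μ + coeffB m μ * (1 / 2) + coeffC m μ * (1 / 2) ^ 2 + coeffD m μ * (1 / 2) ^ 3

theorem RI13_eq_mul (m : ℕ) (μ : ℝ) :
    RI13 m μ = ((m : ℝ) + 1) * ((m : ℝ) + 2) * μ ^ 3 * (4 + ((m : ℝ) - 1) * μ) *
      (3 + (m : ℝ) * μ) * (5 * (m : ℝ) + 4 + ((m : ℝ) ^ 2 - 2 * (m : ℝ) - 2) * μ) := by
  simp only [RI13, coeffA, coeffB, coeffC, coeffD]
  ring

theorem RI13_pos {m : ℕ} (hm : 3 ≤ m) {μ : ℝ} (hμ : 0 < μ) : 0 < RI13 m μ := by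
  have hm' : (3 : ℝ) ≤ m := by exact_mod_cast hm
  have h₁ : 0 < 4 + ((m : ℝ) - 1) * μ := by nlinarith
  have h₂ : 0 < 3 + (m : ℝ) * μ := by nlinarith
  have h₃ : 0 < 5 * (m : ℝ) + 4 + ((m : ℝ) ^ 2 - 2 * (m : ℝ) - 2) * μ := by nlinarith
  rw [RI13_eq_mul]
  positivity

theorem RI13_eq_zero_iff {m : ℕ} (hm : 1 ≤ m) {μ : ℝ} (hμ : 0 < μ) :
    RI13 m μ = 0 ↔ (2 + 2 * (m : ℝ) - (m : ℝ) ^ 2) * μ = 5 * (m : ℝ) + 4 := by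
  have hm' : (1 : ℝ) ≤ m := by exact_mod_cast hm
  have h₁ : 0 < 4 + ((m : ℝ) - 1) * μ := by nlinarith
  have h₂ : 0 < 3 + (m : ℝ) * μ := by nlinarith
  have hprefix : ((m : ℝ) + 1) * ((m : ℝ) + 2) * μ ^ 3 * (4 + ((m : ℝ) - 1) * μ) *
      (3 + (m : ℝ) * μ) ≠ 0 := by positivity
  rw [RI13_eq_mul, mul_eq_zero, or_iff_right hprefix]
  constructor <;> intro h <;> linarith

theorem existsUnique_pos_RI13_eq_zero {m : ℕ} (hm : 1 ≤ m) (hm₂ : (m : ℝ) ^ 2 < 2 * m + 2) :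
    ∃! ν : ℝ, 0 < ν ∧ RI13 m ν = 0 := by
  have hc : 0 < 2 + 2 * (m : ℝ) - (m : ℝ) ^ 2 := by linarith
  refine ⟨(5 * m + 4) / (2 + 2 * m - m ^ 2), ⟨by positivity, ?_⟩, ?_⟩
  · rw [RI13_eq_zero_iff hm (by positivity)]
    exact mul_div_cancel₀ _ hc.ne'
  · rintro ν ⟨hν, hR⟩
    rw [RI13_eq_zero_iff hm hν] at hR
    rw [eq_div_iff hc.ne', mul_comm, hR]

theorem qI13_one (μ : ℝ) : qI13 1 μ = 3 * (2 - μ ^ 2) := by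
  simp only [qI13, coeffA, coeffB, coeffC, coeffD]
  ring

theorem qI13_two (μ : ℝ) : qI13 2 μ = 6 + 11 / 2 * μ - 3 * μ ^ 2 - μ ^ 3 := by
  simp only [qI13, coeffA, coeffB, coeffC, coeffD]
  ring

/-- Hurwitz determinant `Δ₂` for type `I_{1,3}`: factorization
`R_m(μ) = (m+1)(m+2)μ³[4+(m-1)μ](3+mμ)[5m+4+(m²-2m-2)μ]`; positivity for
`m ≥ 3`; for `m = 1, 2` a unique positive root `ν₁ = 3`, `ν₂ = 7` exceeding the
unique positive root `μ_m` of `q_m`. -/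
theorem RI13_sign :
    (∀ m : ℕ, 1 ≤ m → ∀ μ : ℝ,
      RI13 m μ = ((m : ℝ) + 1) * ((m : ℝ) + 2) * μ ^ 3 * (4 + ((m : ℝ) - 1) * μ) *
        (3 + (m : ℝ) * μ) * (5 * (m : ℝ) + 4 + ((m : ℝ) ^ 2 - 2 * (m : ℝ) - 2) * μ)) ∧
    (∀ m : ℕ, 3 ≤ m → ∀ μ : ℝ, 0 < μ → 0 < RI13 m μ) ∧
    (∃! ν : ℝ, 0 < ν ∧ RI13 1 ν = 0) ∧ RI13 1 3 = 0 ∧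
    (∃! ν : ℝ, 0 < ν ∧ RI13 2 ν = 0) ∧ RI13 2 7 = 0 ∧
    (∀ μ₁ : ℝ, 0 < μ₁ → qI13 1 μ₁ = 0 → μ₁ < 3) ∧
    (∀ μ₂ : ℝ, 0 < μ₂ → qI13 2 μ₂ = 0 → μ₂ < 7) := by
  have hR₁ : RI13 1 3 = 0 := (RI13_eq_zero_iff le_rfl (by norm_num)).2 (by norm_num)
  have hR₂ : RI13 2 7 = 0 := (RI13_eq_zero_iff (by norm_num) (by norm_num)).2 (by norm_num)
  refine ⟨fun m _ μ => RI13_eq_mul m μ, fun m hm μ hμ => RI13_pos hm hμ,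
    existsUnique_pos_RI13_eq_zero le_rfl (by norm_num), hR₁,
    existsUnique_pos_RI13_eq_zero (by norm_num) (by norm_num), hR₂, ?_, ?_⟩
  · intro μ hμ hq
    rw [qI13_one] at hq
    nlinarith
  · intro μ hμ hq
    rw [qI13_two] at hq
    nlinarith [pow_pos hμ 3]
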